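/- Let $K \subseteq \mathbb{R}^d$ be a convex compact set with $0$ in its interior, let $y \in S^{d-1}$, let $I := \{t y : t y \in K\}$ be the corresponding diameter segment, and let $x' \in I$. Let $\Delta$ be the set of continuous convex functions on $K$, let $A(x', I)$ be the algebra of continuous functions on $K$ that are constant on some closed subinterval of $I$ with non-empty relative interior containing $x'$, and let $\Delta' := \{f \in \Delta : \min_{x \in I} f(x) = f(x')\}$. Then the uniform closure of $A(x', I) \cap \Delta$ equals $\Delta'$. -/

import Mathlib

open Set Filter Topology Pointwise

/-!
Uniform limits of continuous convex functions are continuous and convex, and on a line a convex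
function that is constant on a nondegenerate segment attains its minimum there; this gives `⊆`.

Conversely, let `f` be minimal on `I` at `x'`. Strictly separating `(x', f x' - δ)` from the
(truncated) epigraph of `f` translated along `ℝ ∙ y` yields an affine `a < f` on `K`, constant in
the direction `y`, with `f x' < a x' + δ`. Then `max f (a + δ)` is convex, `δ`-close to `f`, and by
convexity of `f - a` it equals `a + δ`, hence is constant, on a short segment of `I` at `x'`.
-/

theorem ConvexOn.le_of_eqOn_Icc {S : Set ℝ} {g : ℝ → ℝ} (hg : ConvexOn ℝ S g) {a b m t : ℝ}
    (hab : a < b) (ha : a ∈ S) (hb : b ∈ S) (hconst : ∀ s ∈ Icc a b, g s = m) (ht : t ∈ S) :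
    m ≤ g t := by
  have hga : g a = m := hconst a (left_mem_Icc.2 hab.le)
  have hgb : g b = m := hconst b (right_mem_Icc.2 hab.le)
  rcases lt_or_ge t a with hta | hat
  · rw [← hga]
    exact hg.le_left_of_right_le'' ht hb hta.le hab (hgb.trans hga.symm).le
  rcases le_or_gt t b with htb | hbt
  · exact (hconst t ⟨hat, htb⟩).ge
  · rw [← hgb]
    exact hg.le_right_of_left_le'' ha ht hab hbt.le (hga.trans hgb.symm).le

theorem eq_zero_of_forall_lt_add_mul {u a b : ℝ} (h : ∀ t : ℝ, u < a + t * b) : b = 0 := by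
  by_contra hb
  have := h ((u - a) / b)
  rw [div_mul_cancel₀ _ hb] at this
  linarith

theorem tendstoUniformlyOn_of_forall_dist_le_one_div {α β : Type*} [PseudoMetricSpace β]
    {G : ℕ → α → β} {f : α → β} {s : Set α}
    (hGf : ∀ n, ∀ x ∈ s, dist (f x) (G n x) ≤ 1 / (n + 1)) : TendstoUniformlyOn G f atTop s := by
  refine Metric.tendstoUniformlyOn_iff.2 fun ε hε => ?_
  obtain ⟨N, hN⟩ := exists_nat_one_div_lt hε
  filter_upwards [eventually_ge_atTop N] with n hn x hx
  calc dist (f x) (G n x) ≤ 1 / (n + 1) := hGf n x hx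
    _ ≤ 1 / (N + 1) := Nat.one_div_le_one_div hn
    _ < ε := hN

section

variable {E : Type*} [AddCommGroup E] [Module ℝ E]

theorem ConvexOn.le_of_eqOn_segment_of_mem_span {K : Set E} {F : E → ℝ} (hF : ConvexOn ℝ K F)
    {y p q x : E} {m : ℝ} (hpq : p ≠ q) (hp : p ∈ ℝ ∙ y) (hq : q ∈ ℝ ∙ y)
    (hseg : segment ℝ p q ⊆ K) (hconst : ∀ z ∈ segment ℝ p q, F z = m) (hxK : x ∈ K)
    (hx : x ∈ ℝ ∙ y) : m ≤ F x := by
  obtain ⟨a, rfl⟩ := Submodule.mem_span_singleton.1 hp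
  obtain ⟨b, rfl⟩ := Submodule.mem_span_singleton.1 hq
  obtain ⟨t, rfl⟩ := Submodule.mem_span_singleton.1 hx
  have hab : a ≠ b := fun h => hpq (h ▸ rfl)
  let L := LinearMap.toSpanSingleton ℝ E y
  have himage : ∀ s ∈ uIcc a b, s • y ∈ segment ℝ (a • y) (b • y) := fun s hs => by
    rw [← segment_eq_uIcc] at hs
    simpa [L] using image_segment ℝ L.toAffineMap a b ▸ mem_image_of_mem L.toAffineMap hs
  refine (hF.comp_linearMap L).le_of_eqOn_Icc (min_lt_max.2 hab) ?_ ?_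
    (fun s hs => hconst _ (himage s hs)) hxK
  · exact hseg (himage _ ⟨le_rfl, min_le_max⟩)
  · exact hseg (himage _ ⟨min_le_max, le_rfl⟩)

theorem ConvexOn.of_tendsto {ι : Type*} {l : Filter ι} [l.NeBot] {s : Set E} {F : ι → E → ℝ}
    {f : E → ℝ} (hF : ∀ᶠ i in l, ConvexOn ℝ s (F i))
    (hlim : ∀ x ∈ s, Tendsto (fun i => F i x) l (𝓝 (f x))) : ConvexOn ℝ s f := by
  obtain ⟨i, hi⟩ := hF.exists
  refine ⟨hi.1, fun x hx z hz a b ha hb hab => ?_⟩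
  exact le_of_tendsto_of_tendsto (hlim _ (hi.1 hx hz ha hb hab))
    (((hlim x hx).const_smul a).add ((hlim z hz).const_smul b))
    (hF.mono fun i hi => hi.2 hx hz ha hb hab)

theorem ConvexOn.exists_segment_lt {K : Set E} {g : E → ℝ} (hg : ConvexOn ℝ K g) {x q₀ : E}
    (hx : x ∈ K) (hq₀ : q₀ ∈ K) (hne : q₀ ≠ x) {c : ℝ} (hgx : g x < c) :
    ∃ q ∈ segment ℝ x q₀, q ≠ x ∧ ∀ z ∈ segment ℝ x q, g z < c := by
  have hlim : Tendsto (fun θ : ℝ => (1 - θ) * g x + θ * g q₀) (𝓝[>] 0) (𝓝 (g x)) := by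
    refine tendsto_nhdsWithin_of_tendsto_nhds ?_
    have : Continuous (fun θ : ℝ => (1 - θ) * g x + θ * g q₀) := by fun_prop
    simpa using this.tendsto 0
  obtain ⟨θ, hθc, hθ0, hθ1⟩ := ((hlim.eventually (gt_mem_nhds hgx)).and
    (Ioo_mem_nhdsGT one_pos : ∀ᶠ θ in 𝓝[>] (0 : ℝ), θ ∈ Ioo 0 1)).exists
  set q := (1 - θ) • x + θ • q₀
  have hqseg : q ∈ segment ℝ x q₀ := ⟨1 - θ, θ, by linarith, hθ0.le, by ring, rfl⟩
  have hqK : q ∈ K := hg.1.segment_subset hx hq₀ hqseg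
  have hgq : g q < c := (hg.2 hx hq₀ (by linarith) hθ0.le (by ring)).trans_lt hθc
  refine ⟨q, hqseg, fun hqx => hne ?_, fun z hz => ?_⟩
  · have : θ • (q₀ - x) = 0 := by rw [← sub_eq_zero.2 hqx]; module
    exact sub_eq_zero.1 ((smul_eq_zero.1 this).resolve_left hθ0.ne')
  · exact (hg.le_on_segment hx hqK hz).trans_lt (max_lt hgx hgq)

end

section

variable {E : Type*} [NormedAddCommGroup E] [NormedSpace ℝ E]

theorem nontrivial_inter_span_singleton {K : Set E} (h0 : (0 : E) ∈ interior K) {y : E}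
    (hy : y ≠ 0) : (K ∩ (ℝ ∙ y)).Nontrivial := by
  have hsmul : Tendsto (fun t : ℝ => t • y) (𝓝[≠] 0) (𝓝 0) :=
    tendsto_nhdsWithin_of_tendsto_nhds
      ((continuous_id.smul continuous_const).tendsto' 0 0 (zero_smul ℝ y))
  obtain ⟨t, htK, ht0⟩ := ((hsmul.eventually (mem_interior_iff_mem_nhds.1 h0)).and
    self_mem_nhdsWithin).exists
  exact ⟨0, ⟨interior_subset h0, zero_mem _⟩, t • y,
    ⟨htK, Submodule.smul_mem _ t (Submodule.mem_span_singleton_self y)⟩, (smul_ne_zero ht0 hy).symm⟩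

theorem ConvexOn.exists_dual_separating_of_forall_le_add {K : Set E} (hK : IsCompact K)
    {f : E → ℝ} (hf : ContinuousOn f K) (hfc : ConvexOn ℝ K f) {V : Submodule ℝ E}
    (hV : IsClosed (V : Set E)) {x : E} (hmin : ∀ w ∈ V, x + w ∈ K → f x ≤ f (x + w))
    {ε : ℝ} (hε : 0 < ε) :
    ∃ (ℓ : StrongDual ℝ (E × ℝ)) (u : ℝ),
      ℓ (x, f x - ε) < u ∧ ∀ z ∈ K, ∀ w ∈ V, u < ℓ (z + w, f z) := by
  obtain ⟨M, hM⟩ := hK.bddAbove_image hf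
  obtain ⟨m, hm⟩ := hK.bddBelow_image hf
  -- truncating the epigraph at height `M` makes it compact, so that `D + V × {0}` is closed
  set D : Set (E × ℝ) := {p | p.1 ∈ K ∧ f p.1 ≤ p.2} ∩ {p | p.2 ≤ M}
  have hDconv : Convex ℝ D :=
    hfc.convex_epigraph.inter ((convex_Iic M).linear_preimage (LinearMap.snd ℝ E ℝ))
  have hDcpt : IsCompact D := by
    refine (hK.prod (isCompact_Icc (a := m) (b := M))).of_isClosed_subset
      (((lowerSemicontinuousOn_iff_isClosed_epigraph hK.isClosed).1
        hf.lowerSemicontinuousOn).inter (isClosed_le continuous_snd continuous_const)) ?_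
    rintro p ⟨⟨hpK, hfp⟩, hpM⟩
    exact ⟨hpK, (hm (mem_image_of_mem f hpK)).trans hfp, hpM⟩
  have hnot : (x, f x - ε) ∉ D + (V : Set E) ×ˢ {(0 : ℝ)} := by
    rintro ⟨⟨z, r⟩, ⟨⟨hz, hfz⟩, -⟩, ⟨w, s⟩, ⟨hw, hs⟩, hsum⟩
    obtain rfl : s = 0 := hs
    obtain ⟨rfl, rfl⟩ : z + w = x ∧ r = f x - ε := by simpa using hsum
    have := hmin (-w) (neg_mem hw) (by simpa using hz)
    simp only [add_neg_cancel_right] at this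
    linarith
  obtain ⟨ℓ, u, hℓx, hℓC⟩ := geometric_hahn_banach_point_closed
    (hDconv.add (V.convex.prod (convex_singleton (0 : ℝ))))
    ((hV.prod isClosed_singleton).add_left_of_isCompact hDcpt) hnot
  exact ⟨ℓ, u, hℓx, fun z hz w hw => hℓC _
    ⟨(z, f z), ⟨⟨hz, le_rfl⟩, hM (mem_image_of_mem f hz)⟩, (w, 0), ⟨hw, rfl⟩, by simp⟩⟩

theorem ConvexOn.exists_affine_lt_of_forall_le_add {K : Set E} (hK : IsCompact K) {f : E → ℝ}
    (hf : ContinuousOn f K) (hfc : ConvexOn ℝ K f) {V : Submodule ℝ E}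
    (hV : IsClosed (V : Set E)) {x : E} (hx : x ∈ K)
    (hmin : ∀ w ∈ V, x + w ∈ K → f x ≤ f (x + w)) {ε : ℝ} (hε : 0 < ε) :
    ∃ (φ : StrongDual ℝ E) (c : ℝ),
      (∀ w ∈ V, φ w = 0) ∧ (∀ z ∈ K, φ z + c < f z) ∧ f x - ε < φ x + c := by
  obtain ⟨ℓ, u, hℓx, hℓC⟩ := hfc.exists_dual_separating_of_forall_le_add hK hf hV hmin hε
  set ψ := ℓ.comp (ContinuousLinearMap.inl ℝ E ℝ)
  set β := ℓ (0, 1)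
  have hℓ : ∀ z r, ℓ (z, r) = ψ z + r * β := fun z r => by
    rw [show ((z, r) : E × ℝ) = (z, 0) + r • (0, 1) by simp, map_add, map_smul, smul_eq_mul]
    rfl
  have hKℓ : ∀ z ∈ K, u < ψ z + f z * β := fun z hz => by
    simpa [hℓ] using hℓC z hz 0 V.zero_mem
  have hψV : ∀ w ∈ V, ψ w = 0 := fun w hw =>
    eq_zero_of_forall_lt_add_mul (u := u) (a := ψ x + f x * β) fun t => by
      have := hℓC x hx (t • w) (V.smul_mem t hw)
      rw [hℓ, map_add, map_smul, smul_eq_mul] at this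
      linarith
  rw [hℓ] at hℓx
  have hβ : 0 < β := by nlinarith [hKℓ x hx]
  have haff : ∀ z, (-β⁻¹ • ψ) z + u / β = (u - ψ z) / β := fun z => by
    change -β⁻¹ * ψ z + u / β = _
    field_simp
    ring
  refine ⟨-β⁻¹ • ψ, u / β, fun w hw => by simp [hψV w hw], fun z hz => ?_, ?_⟩
  · rw [haff, div_lt_iff₀ hβ]
    linarith [hKℓ z hz]
  · rw [haff, lt_div_iff₀ hβ]
    linarith

theorem ConvexOn.exists_approx_const_on_segment {K : Set E} (hK : IsCompact K) {f : E → ℝ}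
    (hf : ContinuousOn f K) (hfc : ConvexOn ℝ K f) {V : Submodule ℝ E} (hV : IsClosed (V : Set E))
    {x : E} (hx : x ∈ K) (hmin : ∀ w ∈ V, x + w ∈ K → f x ≤ f (x + w)) {q₀ : E} (hq₀ : q₀ ∈ K)
    (hq₀V : q₀ - x ∈ V) (hne : q₀ ≠ x) {δ : ℝ} (hδ : 0 < δ) :
    ∃ G : E → ℝ, (ContinuousOn G K ∧ ConvexOn ℝ K G ∧
        ∃ q ∈ segment ℝ x q₀, q ≠ x ∧ ∀ z ∈ segment ℝ x q, G z = G x) ∧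
      ∀ z ∈ K, dist (f z) (G z) ≤ δ := by
  obtain ⟨φ, c, hφV, hφK, hφx⟩ := hfc.exists_affine_lt_of_forall_le_add hK hf hV hx hmin hδ
  have hgap : ConvexOn ℝ K (fun z => f z - φ z) := hfc.sub (φ.toLinearMap.concaveOn hfc.1)
  obtain ⟨q, hq, hqx, hlt⟩ := hgap.exists_segment_lt hx hq₀ hne (c := c + δ) (by linarith)
  have hφseg : ∀ z ∈ segment ℝ x q₀, φ z = φ x := by
    rw [segment_eq_image']
    rintro _ ⟨θ, -, rfl⟩
    simp [hφV _ hq₀V]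
  let G := f ⊔ fun z => φ z + c + δ
  have hGseg : ∀ z ∈ segment ℝ x q, G z = φ x + c + δ := fun z hz => by
    rw [← hφseg z ((convex_segment x q₀).segment_subset (left_mem_segment ℝ x q₀) hq hz)]
    exact sup_eq_right.2 (by linarith [hlt z hz])
  have hGconv : ConvexOn ℝ K G :=
    hfc.sup (((φ.toLinearMap.convexOn hfc.1).add_const c).add_const δ)
  refine ⟨G, ⟨hf.sup (by fun_prop), hGconv, q, hq, hqx,
    fun z hz => (hGseg z hz).trans (hGseg x (left_mem_segment ℝ x q)).symm⟩, fun z hz => ?_⟩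
  rw [dist_comm, Real.dist_eq, abs_le]
  have := hφK z hz
  simp only [G, Pi.sup_apply]
  constructor <;> grind

end

theorem stmt16 {d : ℕ} (K : Set (EuclideanSpace ℝ (Fin d)))
    (hKc : Convex ℝ K) (hK : IsCompact K)
    (h0 : (0 : EuclideanSpace ℝ (Fin d)) ∈ interior K)
    (y : EuclideanSpace ℝ (Fin d)) (hy : ‖y‖ = 1)
    (I : Set (EuclideanSpace ℝ (Fin d)))
    (hI : I = {x | ∃ t : ℝ, x = t • y ∧ x ∈ K})
    (x' : EuclideanSpace ℝ (Fin d)) (hx' : x' ∈ I) :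
    {f : EuclideanSpace ℝ (Fin d) → ℝ |
      ∃ F : ℕ → EuclideanSpace ℝ (Fin d) → ℝ,
        (∀ n, (ContinuousOn (F n) K ∧
            ∃ p q, p ≠ q ∧ segment ℝ p q ⊆ I ∧ x' ∈ segment ℝ p q ∧
              ∀ x ∈ segment ℝ p q, F n x = F n x') ∧
          ContinuousOn (F n) K ∧ ConvexOn ℝ K (F n)) ∧
        TendstoUniformlyOn F f Filter.atTop K} =
    {f : EuclideanSpace ℝ (Fin d) → ℝ |
      (ContinuousOn f K ∧ ConvexOn ℝ K f) ∧ ∀ x ∈ I, f x' ≤ f x} := by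
  have hy0 : y ≠ 0 := norm_ne_zero_iff.1 (hy ▸ one_ne_zero)
  rw [show I = K ∩ (ℝ ∙ y) by ext; simp [hI, Submodule.mem_span_singleton, eq_comm, and_comm]]
    at hx' ⊢
  ext f
  simp only [mem_ofPred_eq]
  constructor
  · rintro ⟨F, hF, hFf⟩
    refine ⟨⟨hFf.continuousOn (Frequently.of_forall fun n => (hF n).2.1),
      ConvexOn.of_tendsto (Eventually.of_forall fun n => (hF n).2.2)
        fun x hx => hFf.tendsto_at hx⟩, fun x hx => ?_⟩
    refine le_of_tendsto_of_tendsto' (hFf.tendsto_at hx'.1) (hFf.tendsto_at hx.1) fun n => ?_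
    obtain ⟨p, q, hpq, hseg, -, hconst⟩ := (hF n).1.2
    exact (hF n).2.2.le_of_eqOn_segment_of_mem_span hpq (hseg (left_mem_segment ℝ p q)).2
      (hseg (right_mem_segment ℝ p q)).2 (hseg.trans inter_subset_left) hconst hx.1 hx.2
  · rintro ⟨⟨hfc, hfconv⟩, hmin⟩
    obtain ⟨q₀, hq₀, hq₀x⟩ := (nontrivial_inter_span_singleton h0 hy0).exists_ne x'
    choose G hG hGf using fun n : ℕ => hfconv.exists_approx_const_on_segment hK hfc
      (Submodule.closed_of_finiteDimensional _) hx'.1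
      (fun w hw hwK => hmin _ ⟨hwK, add_mem hx'.2 hw⟩) hq₀.1 (sub_mem hq₀.2 hx'.2) hq₀x
      (Nat.one_div_pos_of_nat (n := n))
    refine ⟨G, fun n => ?_, tendstoUniformlyOn_of_forall_dist_le_one_div hGf⟩
    obtain ⟨hGc, hGconv, q, hq, hqx, hGq⟩ := hG n
    refine ⟨⟨hGc, x', q, hqx.symm, ?_, left_mem_segment ℝ x' q, hGq⟩, hGc, hGconv⟩
    exact ((convex_segment x' q₀).segment_subset (left_mem_segment ℝ x' q₀) hq).trans
      ((hKc.inter (ℝ ∙ y).convex).segment_subset hx' hq₀)
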